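/- Let n ≥ 1, X = ℝⁿ/ℤⁿ, β ≠ 0 a real number, and μ₀ a Borel probability measure on X that is absolutely continuous with smooth, strictly positive density with respect to dx. Then the functional F(φ) = ∫_X φ^c dx + (1/β) log ∫_X e^{βφ} dμ₀ attains its infimum over C(X): there exists φ* ∈ C(X) with F(φ*) = inf_{φ ∈ C(X)} F(φ). -/

import Mathlib

open MeasureTheory Filter Topology Real
open scoped ENNReal NNReal

noncomputable section

instance fact_zero_lt_one' : Fact ((0:ℝ) < 1) := ⟨one_pos⟩

/-- The `n`-dimensional torus `ℝⁿ/ℤⁿ`. -/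
abbrev Torus (n : ℕ) : Type := Fin n → AddCircle (1 : ℝ)

/-- Section of the quotient map, with values in `[0,1)ⁿ`. -/
def torusSec {n : ℕ} (x : Torus n) : Fin n → ℝ := fun i => (AddCircle.equivIco 1 0 (x i) : ℝ)

/-- Squared Euclidean norm on `ℝⁿ`. -/
def sqnorm {n : ℕ} (v : Fin n → ℝ) : ℝ := ∑ i, (v i)^2

/-- A lattice point of `ℤⁿ` viewed in `ℝⁿ`. -/
def zvec {n : ℕ} (m : Fin n → ℤ) : Fin n → ℝ := fun i => (m i : ℝ)

/-- The quotient metric `d(πx, πy) = inf_{m ∈ ℤⁿ} |x - y - m|` on the torus. -/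
def tdist {n : ℕ} (x y : Torus n) : ℝ :=
  ⨅ m : Fin n → ℤ, Real.sqrt (sqnorm (torusSec x - torusSec y - zvec m))

/-- The `c`-transform `φ^c(y) = sup_x (-d(x,y)²/2 - φ(x))` on the torus. -/
def ctrans {n : ℕ} (φ : Torus n → ℝ) (y : Torus n) : ℝ :=
  ⨆ x : Torus n, (-(tdist x y ^ 2) / 2 - φ x)

/-- The quotient map `π : ℝⁿ → ℝⁿ/ℤⁿ`. -/
def torusPi {n : ℕ} (x : Fin n → ℝ) : Torus n := fun i => (x i : AddCircle (1:ℝ))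

/-- The free energy functional `F(φ) = ∫_X φ^c dx + (1/β) log ∫_X e^{βφ} dμ₀`. -/
def freeEnergy {n : ℕ} (β : ℝ) (μ₀ : Measure (Torus n)) (φ : Torus n → ℝ) : ℝ :=
  (∫ y, ctrans φ y ∂(volume : Measure (Torus n))) +
    (1 / β) * Real.log (∫ x, Real.exp (β * φ x) ∂μ₀)

section Aux
open MeasureTheory

variable {n : ℕ}

lemma sqrt_sqnorm_eq (v : Fin n → ℝ) :
    Real.sqrt (sqnorm v) = ‖(WithLp.equiv 2 (Fin n → ℝ)).symm v‖ := by
  rw [EuclideanSpace.norm_eq]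
  congr 1
  unfold sqnorm
  congr 1
  ext i
  rw [show ‖(WithLp.equiv 2 (Fin n → ℝ)).symm v i‖ = |v i| from rfl, sq_abs]

lemma sqrt_sqnorm_nonneg (v : Fin n → ℝ) : 0 ≤ Real.sqrt (sqnorm v) := Real.sqrt_nonneg _

lemma sqrt_sqnorm_add_le (a b : Fin n → ℝ) :
    Real.sqrt (sqnorm (a + b)) ≤ Real.sqrt (sqnorm a) + Real.sqrt (sqnorm b) := by
  simp only [sqrt_sqnorm_eq]
  rw [show (WithLp.equiv 2 (Fin n → ℝ)).symm (a + b)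
    = (WithLp.equiv 2 (Fin n → ℝ)).symm a + (WithLp.equiv 2 (Fin n → ℝ)).symm b from rfl]
  exact norm_add_le _ _

lemma sqrt_sqnorm_neg (a : Fin n → ℝ) : Real.sqrt (sqnorm (-a)) = Real.sqrt (sqnorm a) := by
  simp only [sqrt_sqnorm_eq]
  rw [show (WithLp.equiv 2 (Fin n → ℝ)).symm (-a) = -(WithLp.equiv 2 (Fin n → ℝ)).symm a from rfl]
  exact norm_neg _

lemma tdist_bddBelow (x y : Torus n) :
    BddBelow (Set.range fun m : Fin n → ℤ => Real.sqrt (sqnorm (torusSec x - torusSec y - zvec m))) :=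
  ⟨0, by rintro _ ⟨m, rfl⟩; exact sqrt_sqnorm_nonneg _⟩

lemma tdist_nonneg (x y : Torus n) : 0 ≤ tdist x y :=
  le_ciInf fun m => sqrt_sqnorm_nonneg _

lemma tdist_le (x y : Torus n) (m : Fin n → ℤ) :
    tdist x y ≤ Real.sqrt (sqnorm (torusSec x - torusSec y - zvec m)) :=
  ciInf_le (tdist_bddBelow x y) m

lemma tdist_self (x : Torus n) : tdist x x = 0 := by
  refine le_antisymm ?_ (tdist_nonneg x x)
  have := tdist_le x x 0
  simpa [sqnorm, zvec] using this

lemma tdist_symm (x y : Torus n) : tdist x y = tdist y x := by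
  have key : ∀ a b : Torus n, tdist a b ≤ tdist b a := by
    intro a b
    refine le_ciInf fun m => ?_
    have h := tdist_le a b (-m)
    refine h.trans_eq ?_
    rw [show torusSec a - torusSec b - zvec (-m) = -(torusSec b - torusSec a - zvec m) by
      funext i; simp [zvec]; ring]
    exact sqrt_sqnorm_neg _
  exact le_antisymm (key x y) (key y x)

lemma tdist_triangle (x y z : Torus n) : tdist x z ≤ tdist x y + tdist y z := by
  have h1 : ∀ m m' : Fin n → ℤ, tdist x z ≤
      Real.sqrt (sqnorm (torusSec x - torusSec y - zvec m)) +
      Real.sqrt (sqnorm (torusSec y - torusSec z - zvec m')) := by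
    intro m m'
    refine (tdist_le x z (m + m')).trans ?_
    rw [show torusSec x - torusSec z - zvec (m + m')
      = (torusSec x - torusSec y - zvec m) + (torusSec y - torusSec z - zvec m') by
      funext i; simp [zvec]; ring]
    exact sqrt_sqnorm_add_le _ _
  -- infimum juggling
  have h2 : ∀ m : Fin n → ℤ, tdist x z - Real.sqrt (sqnorm (torusSec x - torusSec y - zvec m))
      ≤ tdist y z := by
    intro m
    refine le_ciInf fun m' => ?_
    linarith [h1 m m']
  have h3 : tdist x z - tdist y z ≤ tdist x y := by
    refine le_ciInf fun m => ?_
    linarith [h2 m]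
  linarith

/-- Any representatives give an upper bound on `tdist`. -/
lemma tdist_torusPi_le (a b : Fin n → ℝ) :
    tdist (torusPi a) (torusPi b) ≤ Real.sqrt (sqnorm (a - b)) := by
  have sec_sub : ∀ c : Fin n → ℝ, ∃ k : Fin n → ℤ,
      ∀ i, torusSec (torusPi c) i = c i + (k i : ℝ) := by
    intro c
    refine ⟨fun i => -⌊c i⌋, fun i => ?_⟩
    have : torusSec (torusPi c) i = Int.fract (c i / 1) * 1 :=
      AddCircle.coe_equivIco_mk_apply 1 (c i)
    rw [this]
    push_cast
    rw [Int.fract]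
    ring
  obtain ⟨ka, hka⟩ := sec_sub a
  obtain ⟨kb, hkb⟩ := sec_sub b
  refine (tdist_le _ _ (ka - kb)).trans_eq ?_
  congr 1
  unfold sqnorm
  congr 1
  funext i
  simp [hka i, hkb i, zvec]
  ring

lemma addCircle_dist_le_half (a b : AddCircle (1:ℝ)) : dist a b ≤ 1/2 := by
  rw [dist_eq_norm]
  simpa using AddCircle.norm_le_half_period (p := (1:ℝ)) one_ne_zero (x := a - b)

/-- For each coordinate, the AddCircle distance is realized mod ℤ from any representative. -/
lemma addCircle_dist_eq (r : ℝ) :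
    ‖((r : ℝ) : AddCircle (1:ℝ))‖ = |r - round r| := by
  simpa using AddCircle.norm_eq (p := (1:ℝ)) (x := r)

/-- tdist is controlled by the product metric. -/
lemma tdist_le_sqrt_n_mul_dist (x y : Torus n) :
    tdist x y ≤ Real.sqrt n * dist x y := by
  set s : Fin n → ℝ := torusSec x - torusSec y with hs
  have hrep : ∀ i, ((s i : ℝ) : AddCircle (1:ℝ)) = x i - y i := by
    intro i
    have hx : ((torusSec x i : ℝ) : AddCircle (1:ℝ)) = x i := by
      exact (AddCircle.equivIco 1 0).symm_apply_apply (x i)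
    have hy : ((torusSec y i : ℝ) : AddCircle (1:ℝ)) = y i := by
      exact (AddCircle.equivIco 1 0).symm_apply_apply (y i)
    have : ((s i : ℝ) : AddCircle (1:ℝ))
        = ((torusSec x i : ℝ) : AddCircle (1:ℝ)) - ((torusSec y i : ℝ) : AddCircle (1:ℝ)) := by
      rw [hs]; push_cast [AddCircle.coe_sub]; rfl
    rw [this, hx, hy]
  have hdist : ∀ i, |s i - round (s i)| = dist (x i) (y i) := by
    intro i
    rw [← addCircle_dist_eq (s i), hrep i, dist_eq_norm]
  have h1 : tdist x y ≤ Real.sqrt (sqnorm (s - zvec (fun i => round (s i)))) := tdist_le x y _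
  refine h1.trans ?_
  have h2 : sqnorm (s - zvec (fun i => round (s i))) ≤ n * dist x y ^ 2 := by
    unfold sqnorm
    have : ∀ i : Fin n, ((s - zvec fun i => round (s i)) i)^2 ≤ dist x y ^ 2 := by
      intro i
      have hb : |s i - round (s i)| ≤ dist x y := (hdist i) ▸ dist_le_pi_dist x y i
      have := sq_abs (s i - round (s i))
      calc ((s - zvec fun i => round (s i)) i)^2 = |s i - round (s i)|^2 := by
            rw [sq_abs]; rfl
        _ ≤ dist x y ^ 2 := by
            have h0 : (0:ℝ) ≤ |s i - round (s i)| := abs_nonneg _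
            exact pow_le_pow_left₀ h0 hb 2
    calc ∑ i, ((s - zvec fun i => round (s i)) i)^2 ≤ ∑ _i : Fin n, dist x y ^ 2 :=
          Finset.sum_le_sum fun i _ => this i
      _ = n * dist x y ^ 2 := by simp [mul_comm]
  refine (Real.sqrt_le_sqrt h2).trans ?_
  rw [show (n : ℝ) * dist x y ^2 = (Real.sqrt n * dist x y)^2 by
    rw [mul_pow, Real.sq_sqrt (by positivity)]]
  rw [Real.sqrt_sq (by positivity)]

lemma tdist_le_sqrt_n (x y : Torus n) : tdist x y ≤ Real.sqrt n := by
  refine (tdist_le_sqrt_n_mul_dist x y).trans ?_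
  have : dist x y ≤ 1 := by
    refine (dist_pi_le_iff zero_le_one).mpr fun i => ?_
    exact (addCircle_dist_le_half (x i) (y i)).trans (by norm_num)
  nlinarith [Real.sqrt_nonneg (n:ℝ), this, dist_nonneg (x := x) (y := y)]

instance : Nonempty (Torus n) := inferInstance

section ctrans
variable {φ ψ : Torus n → ℝ} {C : ℝ}

lemma ctrans_bddAbove (hφ : ∀ x, |φ x| ≤ C) (y : Torus n) :
    BddAbove (Set.range fun x : Torus n => -(tdist x y ^ 2) / 2 - φ x) := by
  refine ⟨C, ?_⟩
  rintro _ ⟨x, rfl⟩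
  have h1 : -(tdist x y ^2)/2 ≤ 0 := by nlinarith [tdist_nonneg x y]
  have h2 : -φ x ≤ C := by have := (abs_le.mp (hφ x)).1; linarith
  linarith

lemma le_ctrans (hφ : ∀ x, |φ x| ≤ C) (x y : Torus n) :
    -(tdist x y ^ 2) / 2 - φ x ≤ ctrans φ y :=
  le_ciSup (ctrans_bddAbove hφ y) x

lemma ctrans_le (hφ : ∀ x, |φ x| ≤ C) {B : ℝ}
    (h : ∀ x : Torus n, -(tdist x y ^ 2) / 2 - φ x ≤ B) {y : Torus n} : True := trivial

lemma ctrans_abs_le (hφ : ∀ x, |φ x| ≤ C) (y : Torus n) : |ctrans φ y| ≤ C := by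
  rw [abs_le]
  constructor
  · have := le_ctrans hφ y y
    rw [tdist_self] at this
    have h2 := (abs_le.mp (hφ y)).2
    nlinarith
  · refine ciSup_le fun x => ?_
    have h1 : -(tdist x y ^2)/2 ≤ 0 := by nlinarith [tdist_nonneg x y]
    have h2 : -φ x ≤ C := by have := (abs_le.mp (hφ x)).1; linarith
    linarith

/-- One-sided Lipschitz estimate for the c-transform. -/
lemma ctrans_sub_le (hφ : ∀ x, |φ x| ≤ C) (y y' : Torus n) :
    ctrans φ y - ctrans φ y' ≤ Real.sqrt n * tdist y y' := by
  rw [sub_le_iff_le_add]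
  refine ciSup_le fun x => ?_
  have key : -(tdist x y ^ 2) / 2 - φ x
      ≤ (-(tdist x y' ^ 2) / 2 - φ x) + Real.sqrt n * tdist y y' := by
    have h1 : tdist x y' ≤ tdist x y + tdist y y' := tdist_triangle x y y'
    have h2 : tdist x y ≤ tdist x y' + tdist y' y := tdist_triangle x y' y
    rw [tdist_symm y' y] at h2
    have h3 : tdist x y ≤ Real.sqrt n := tdist_le_sqrt_n x y
    have h4 : tdist x y' ≤ Real.sqrt n := tdist_le_sqrt_n x y'
    have h5 : 0 ≤ tdist x y := tdist_nonneg _ _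
    have h6 : 0 ≤ tdist x y' := tdist_nonneg _ _
    have h7 : 0 ≤ tdist y y' := tdist_nonneg _ _
    nlinarith
  linarith [le_ctrans hφ x y', key]

lemma ctrans_lipschitz (hφ : ∀ x, |φ x| ≤ C) (y y' : Torus n) :
    |ctrans φ y - ctrans φ y'| ≤ (n : ℝ) * dist y y' := by
  have b : ∀ a b : Torus n, ctrans φ a - ctrans φ b ≤ (n:ℝ) * dist a b := by
    intro a b
    refine (ctrans_sub_le hφ a b).trans ?_
    have := tdist_le_sqrt_n_mul_dist a b
    have hs : Real.sqrt n * (Real.sqrt n * dist a b) = (n:ℝ) * dist a b := by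
      rw [← mul_assoc, Real.mul_self_sqrt (by positivity)]
    nlinarith [Real.sqrt_nonneg (n:ℝ), dist_nonneg (x := a) (y := b),
      mul_le_mul_of_nonneg_left this (Real.sqrt_nonneg (n:ℝ))]
  rw [abs_sub_le_iff]
  exact ⟨b y y', by rw [dist_comm]; exact b y' y⟩

lemma ctrans_continuous (hφ : ∀ x, |φ x| ≤ C) : Continuous (ctrans φ) := by
  refine (LipschitzWith.of_dist_le_mul (K := ⟨(n:ℝ), by positivity⟩) fun y y' => ?_).continuous
  rw [Real.dist_eq]
  exact_mod_cast ctrans_lipschitz hφ y y'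

/-- Contraction property under sup-norm perturbations. -/
lemma ctrans_dist_le {Cφ Cψ ε : ℝ} (hφ : ∀ x, |φ x| ≤ Cφ) (hψ : ∀ x, |ψ x| ≤ Cψ)
    (hd : ∀ x, |φ x - ψ x| ≤ ε) (y : Torus n) : |ctrans φ y - ctrans ψ y| ≤ ε := by
  have key : ∀ (f g : Torus n → ℝ) (Cf Cg : ℝ), (∀ x, |f x| ≤ Cf) → (∀ x, |g x| ≤ Cg) →
      (∀ x, |f x - g x| ≤ ε) → ctrans f y - ctrans g y ≤ ε := by
    intro f g Cf Cg hf hg hfg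
    rw [sub_le_iff_le_add]
    refine ciSup_le fun x => ?_
    have h0 := abs_le.mp (hfg x)
    have h1 := le_ctrans hg x y
    linarith
  rw [abs_sub_le_iff]
  exact ⟨key φ ψ _ _ hφ hψ hd, key ψ φ _ _ hψ hφ fun x => by rw [abs_sub_comm]; exact hd x⟩

lemma ctrans_antitone {Cφ Cψ : ℝ} (hφ : ∀ x, |φ x| ≤ Cφ) (hψ : ∀ x, |ψ x| ≤ Cψ)
    (h : ∀ x, φ x ≤ ψ x) (y : Torus n) : ctrans ψ y ≤ ctrans φ y := by
  refine ciSup_le fun x => ?_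
  exact le_trans (by linarith [h x]) (le_ctrans hφ x y)

lemma ctrans_ctrans_le (hφ : ∀ x, |φ x| ≤ C) (x : Torus n) :
    ctrans (ctrans φ) x ≤ φ x := by
  refine ciSup_le fun y => ?_
  have h1 : -(tdist x y ^ 2) / 2 - φ x ≤ ctrans φ y := le_ctrans hφ x y
  rw [tdist_symm y x]
  linarith

lemma ctrans_ctrans_ctrans (hφ : ∀ x, |φ x| ≤ C) :
    ctrans (ctrans (ctrans φ)) = ctrans φ := by
  funext y
  refine le_antisymm ?_ ?_
  · exact ctrans_ctrans_le (ctrans_abs_le hφ) y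
  · have h1 : ∀ x, ctrans (ctrans φ) x ≤ φ x := ctrans_ctrans_le hφ
    have h2 : ∀ x, |ctrans (ctrans φ) x| ≤ C := ctrans_abs_le (ctrans_abs_le hφ)
    exact ctrans_antitone h2 hφ h1 y

lemma ctrans_add_const (hφ : ∀ x, |φ x| ≤ C) (c : ℝ) (y : Torus n) :
    ctrans (fun x => φ x + c) y = ctrans φ y - c := by
  have hφc : ∀ x, |φ x + c| ≤ C + |c| := fun x =>
    (abs_add_le _ _).trans (add_le_add_left (hφ x) _)
  refine le_antisymm ?_ ?_
  · refine ciSup_le fun x => ?_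
    have := le_ctrans hφ x y
    linarith
  · rw [sub_le_iff_le_add]
    refine ciSup_le fun x => ?_
    have := le_ctrans hφc x y
    linarith

end ctrans

section freeEnergy

instance : IsProbabilityMeasure (volume : Measure (AddCircle (1:ℝ))) :=
  ⟨by rw [AddCircle.measure_univ]; simp⟩

instance : IsProbabilityMeasure (volume : Measure (Torus n)) :=
  MeasureTheory.volume_pi (ι := Fin n) (α := fun _ => AddCircle (1:ℝ)) ▸
    Measure.pi.instIsProbabilityMeasure _

variable {μ : Measure (Torus n)} [IsProbabilityMeasure μ] {φ ψ : Torus n → ℝ} {β : ℝ}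

lemma bounded_of_continuous (hφ : Continuous φ) : ∃ C, 0 ≤ C ∧ ∀ x, |φ x| ≤ C := by
  obtain ⟨C, hC⟩ := (isBounded_iff_forall_norm_le).mp (isCompact_range hφ).isBounded
  exact ⟨max C 0, le_max_right _ _, fun x =>
    le_trans (hC (φ x) ⟨x, rfl⟩) (le_max_left _ _)⟩

lemma integrable_of_continuous (hφ : Continuous φ) (μ' : Measure (Torus n))
    [IsFiniteMeasure μ'] : Integrable φ μ' :=
  hφ.integrable_of_hasCompactSupport (HasCompactSupport.of_compactSpace φ)

lemma expInt_pos (hφ : Continuous φ) : 0 < ∫ x, Real.exp (β * φ x) ∂μ := by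
  obtain ⟨C, hC0, hC⟩ := bounded_of_continuous hφ
  have hlow : ∀ x, Real.exp (-(|β| * C)) ≤ Real.exp (β * φ x) := by
    intro x
    refine Real.exp_le_exp.mpr ?_
    have h1 : |β * φ x| ≤ |β| * C := by
      rw [abs_mul]
      exact mul_le_mul_of_nonneg_left (hC x) (abs_nonneg β)
    linarith [(abs_le.mp h1).1]
  have hint : Integrable (fun x => Real.exp (β * φ x)) μ :=
    integrable_of_continuous (by continuity) μ
  have h2 : ∫ _x, Real.exp (-(|β| * C)) ∂μ ≤ ∫ x, Real.exp (β * φ x) ∂μ :=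
    integral_mono (integrable_const _) hint hlow
  have h3 : ∫ _x, Real.exp (-(|β| * C)) ∂μ = Real.exp (-(|β| * C)) := by
    simp
  rw [h3] at h2
  linarith [Real.exp_pos (-(|β| * C))]

/-- The log-integral part of the free energy. -/
lemma logTerm_mono (hβ : β ≠ 0) (hφ : Continuous φ) (hψ : Continuous ψ) (h : ∀ x, φ x ≤ ψ x) :
    (1 / β) * Real.log (∫ x, Real.exp (β * φ x) ∂μ)
      ≤ (1 / β) * Real.log (∫ x, Real.exp (β * ψ x) ∂μ) := by
  have hiφ : Integrable (fun x => Real.exp (β * φ x)) μ :=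
    integrable_of_continuous (by continuity) μ
  have hiψ : Integrable (fun x => Real.exp (β * ψ x)) μ :=
    integrable_of_continuous (by continuity) μ
  have hpφ := expInt_pos (μ := μ) (β := β) hφ
  have hpψ := expInt_pos (μ := μ) (β := β) hψ
  rcases lt_or_gt_of_ne hβ with hneg | hpos
  · have hmono : ∀ x, Real.exp (β * ψ x) ≤ Real.exp (β * φ x) := fun x =>
      Real.exp_le_exp.mpr (by nlinarith [h x])
    have := integral_mono hiψ hiφ hmono
    have hlog := Real.log_le_log hpψ this
    have h1β : (1:ℝ)/β < 0 := by
      apply div_neg_of_pos_of_neg one_pos hneg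
    nlinarith
  · have hmono : ∀ x, Real.exp (β * φ x) ≤ Real.exp (β * ψ x) := fun x =>
      Real.exp_le_exp.mpr (by nlinarith [h x])
    have := integral_mono hiφ hiψ hmono
    have hlog := Real.log_le_log hpφ this
    have h1β : (0:ℝ) < 1/β := by positivity
    nlinarith

lemma logTerm_add_const (hβ : β ≠ 0) (hφ : Continuous φ) (c : ℝ) :
    (1 / β) * Real.log (∫ x, Real.exp (β * (φ x + c)) ∂μ)
      = (1 / β) * Real.log (∫ x, Real.exp (β * φ x) ∂μ) + c := by
  have h1 : ∀ x, Real.exp (β * (φ x + c)) = Real.exp (β * c) * Real.exp (β * φ x) := by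
    intro x; rw [← Real.exp_add]; ring_nf
  have h2 : ∫ x, Real.exp (β * (φ x + c)) ∂μ
      = Real.exp (β * c) * ∫ x, Real.exp (β * φ x) ∂μ := by
    simp_rw [h1]
    exact integral_const_mul _ _
  rw [h2, Real.log_mul (Real.exp_ne_zero _) (ne_of_gt (expInt_pos hφ)), Real.log_exp]
  field_simp
  ring
end freeEnergy

section freeEnergy2
variable {μ : Measure (Torus n)} [IsProbabilityMeasure μ] {φ ψ : Torus n → ℝ} {β : ℝ}

lemma ctrans_integrable (hφ : Continuous φ) : Integrable (ctrans φ) volume := by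
  obtain ⟨C, _, hC⟩ := bounded_of_continuous hφ
  exact integrable_of_continuous (ctrans_continuous hC) volume

lemma freeEnergy_add_const (hβ : β ≠ 0) (hφ : Continuous φ) (c : ℝ) :
    freeEnergy β μ (fun x => φ x + c) = freeEnergy β μ φ := by
  obtain ⟨C, _, hC⟩ := bounded_of_continuous hφ
  unfold freeEnergy
  rw [logTerm_add_const hβ hφ c]
  have h1 : (∫ y, ctrans (fun x => φ x + c) y ∂(volume : Measure (Torus n)))
      = (∫ y, ctrans φ y ∂(volume : Measure (Torus n))) - c := by
    have : (fun y => ctrans (fun x => φ x + c) y) = fun y => ctrans φ y - c := by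
      funext y; exact ctrans_add_const hC c y
    rw [this, integral_sub (ctrans_integrable hφ) (integrable_const c), integral_const]
    simp
  rw [h1]; ring

lemma freeEnergy_ctrans2_le (hβ : β ≠ 0) (hφ : Continuous φ) :
    freeEnergy β μ (ctrans (ctrans φ)) ≤ freeEnergy β μ φ := by
  obtain ⟨C, _, hC⟩ := bounded_of_continuous hφ
  unfold freeEnergy
  have hcont1 : Continuous (ctrans φ) := ctrans_continuous hC
  have hcont2 : Continuous (ctrans (ctrans φ)) := ctrans_continuous (ctrans_abs_le hC)
  have h1 : (∫ y, ctrans (ctrans (ctrans φ)) y ∂(volume : Measure (Torus n)))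
      = (∫ y, ctrans φ y ∂(volume : Measure (Torus n))) := by
    rw [ctrans_ctrans_ctrans hC]
  refine add_le_add (le_of_eq h1) ?_
  exact logTerm_mono hβ hcont2 hφ (ctrans_ctrans_le hC)

/-- Free energy is 2-Lipschitz for the sup norm. -/
lemma freeEnergy_le_of_close (hβ : β ≠ 0) (hφ : Continuous φ) (hψ : Continuous ψ)
    {ε : ℝ} (hε : 0 ≤ ε) (h : ∀ x, |φ x - ψ x| ≤ ε) :
    freeEnergy β μ φ ≤ freeEnergy β μ ψ + 2 * ε := by
  obtain ⟨Cφ, _, hCφ⟩ := bounded_of_continuous hφ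
  obtain ⟨Cψ, _, hCψ⟩ := bounded_of_continuous hψ
  unfold freeEnergy
  have h1 : (∫ y, ctrans φ y ∂(volume : Measure (Torus n)))
      ≤ (∫ y, ctrans ψ y ∂(volume : Measure (Torus n))) + ε := by
    have hpt : ∀ y, ctrans φ y ≤ ctrans ψ y + ε := fun y =>
      by linarith [(abs_le.mp (ctrans_dist_le hCφ hCψ h y)).2]
    calc (∫ y, ctrans φ y ∂(volume : Measure (Torus n)))
        ≤ (∫ y, (ctrans ψ y + ε) ∂(volume : Measure (Torus n))) :=
          integral_mono (ctrans_integrable hφ) ((ctrans_integrable hψ).add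
            (integrable_const ε)) hpt
      _ = (∫ y, ctrans ψ y ∂(volume : Measure (Torus n))) + ε := by
          rw [integral_add (ctrans_integrable hψ) (integrable_const ε), integral_const]
          simp
  have h2 : (1 / β) * Real.log (∫ x, Real.exp (β * φ x) ∂μ)
      ≤ (1 / β) * Real.log (∫ x, Real.exp (β * ψ x) ∂μ) + ε := by
    have hle : ∀ x, φ x ≤ ψ x + ε := fun x => by linarith [(abs_le.mp (h x)).2]
    have := logTerm_mono (μ := μ) hβ hφ (by continuity) hle
    rw [logTerm_add_const hβ hψ ε] at this
    linarith
  linarith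

end freeEnergy2

section main
open BoundedContinuousFunction
variable {β : ℝ} {μ₀ : Measure (Torus n)} [IsProbabilityMeasure μ₀]

/-- basepoint of the torus -/
def tzero (n : ℕ) : Torus n := fun _ => (0 : AddCircle (1:ℝ))

/-- The compact family: `n`-Lipschitz bounded continuous functions vanishing at the basepoint. -/
def Kset (n : ℕ) : Set (Torus n →ᵇ ℝ) :=
  {f | (∀ y y', dist (f y) (f y') ≤ (n:ℝ) * dist y y') ∧ f (tzero n) = 0}

lemma Kset_closed : IsClosed (Kset n) := by
  have h1 : IsClosed {f : Torus n →ᵇ ℝ | ∀ y y', dist (f y) (f y') ≤ (n:ℝ) * dist y y'} := by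
    have he : {f : Torus n →ᵇ ℝ | ∀ y y', dist (f y) (f y') ≤ (n:ℝ) * dist y y'}
        = ⋂ (y : Torus n) (y' : Torus n),
            {f : Torus n →ᵇ ℝ | dist (f y) (f y') ≤ (n:ℝ) * dist y y'} := by
      ext f; simp [Set.mem_iInter]
    rw [he]
    refine isClosed_iInter fun y => isClosed_iInter fun y' => ?_
    refine isClosed_le ?_ continuous_const
    exact Continuous.dist (by continuity) (by continuity)
  have h2 : IsClosed {f : Torus n →ᵇ ℝ | f (tzero n) = 0} :=
    isClosed_eq (by continuity) continuous_const
  exact h1.inter h2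

lemma torus_dist_le_one (x y : Torus n) : dist x y ≤ 1 :=
  (dist_pi_le_iff zero_le_one).mpr fun i =>
    (addCircle_dist_le_half (x i) (y i)).trans (by norm_num)

lemma Kset_in_ball {f : Torus n →ᵇ ℝ} (hf : f ∈ Kset n) (x : Torus n) :
    f x ∈ Metric.closedBall (0:ℝ) n := by
  rw [Metric.mem_closedBall]
  have h1 : dist (f x) (f (tzero n)) ≤ (n:ℝ) * dist x (tzero n) := hf.1 x _
  rw [hf.2] at h1
  calc dist (f x) 0 ≤ (n:ℝ) * dist x (tzero n) := h1
    _ ≤ (n:ℝ) * 1 := by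
        exact mul_le_mul_of_nonneg_left (torus_dist_le_one _ _) (by positivity)
    _ = n := mul_one _

lemma Kset_compact : IsCompact (Kset n) := by
  refine BoundedContinuousFunction.arzela_ascoli₂ (Metric.closedBall (0:ℝ) n)
    (isCompact_closedBall _ _) (Kset n) Kset_closed (fun f x hf => Kset_in_ball hf x) ?_
  refine Metric.equicontinuous_of_continuity_modulus (fun t => (n:ℝ) * t) ?_ _ ?_
  · have : Continuous fun t : ℝ => (n:ℝ) * t := by continuity
    simpa using this.tendsto 0
  · rintro x y ⟨f, hf⟩
    exact hf.1 x y

lemma Kset_nonempty : (Kset n).Nonempty :=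
  ⟨0, fun y y' => by simp [mul_nonneg, dist_nonneg], by simp⟩

lemma freeEnergy_continuousOn (hβ : β ≠ 0) :
    Continuous (fun f : Torus n →ᵇ ℝ => freeEnergy β μ₀ f) := by
  refine (LipschitzWith.of_dist_le_mul (K := 2) fun f g => ?_).continuous
  rw [Real.dist_eq, abs_sub_le_iff]
  have hd : ∀ (u v : Torus n →ᵇ ℝ), ∀ x, |u x - v x| ≤ dist u v := by
    intro u v x
    rw [← Real.dist_eq]
    exact BoundedContinuousFunction.dist_coe_le_dist x
  constructor
  · have := freeEnergy_le_of_close (μ := μ₀) hβ f.continuous g.continuous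
      dist_nonneg (hd f g)
    push_cast
    linarith
  · have := freeEnergy_le_of_close (μ := μ₀) hβ g.continuous f.continuous
      dist_nonneg (hd g f)
    rw [dist_comm g f] at this
    push_cast
    linarith

end main


end Aux

open BoundedContinuousFunction

/-- For `β ≠ 0` and `μ₀` with smooth strictly positive density, the free
energy `F` attains its infimum over `C(X)`: there is a continuous minimizer. -/
theorem statement19 (n : ℕ) (hn : 1 ≤ n) (β : ℝ) (hβ : β ≠ 0)
    (μ₀ : Measure (Torus n)) [IsProbabilityMeasure μ₀]
    (g : Torus n → ℝ) (hg_smooth : ContDiff ℝ (⊤ : ℕ∞) (g ∘ torusPi)) (hg_pos : ∀ x, 0 < g x)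
    (hμ₀ : μ₀ = volume.withDensity fun x => ENNReal.ofReal (g x)) :
    ∃ φs : Torus n → ℝ, Continuous φs ∧
      ∀ φ : Torus n → ℝ, Continuous φ → freeEnergy β μ₀ φs ≤ freeEnergy β μ₀ φ := by
  obtain ⟨f₀, hf₀A, hmin⟩ := Kset_compact.exists_isMinOn Kset_nonempty
    ((freeEnergy_continuousOn (μ₀ := μ₀) hβ).continuousOn)
  refine ⟨f₀, f₀.continuous, fun φ hφ => ?_⟩
  -- double c-transform of φ, normalized at the basepoint
  obtain ⟨C, hC0, hC⟩ := bounded_of_continuous hφ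
  set ψ := ctrans φ with hψ
  have hCψ : ∀ x, |ψ x| ≤ C := ctrans_abs_le hC
  set φ₂ := ctrans ψ with hφ₂
  have hCφ₂ : ∀ x, |φ₂ x| ≤ C := ctrans_abs_le hCψ
  have hφ₂cont : Continuous φ₂ := ctrans_continuous hCψ
  set c := φ₂ (tzero n) with hc
  set φ₃ := fun x => φ₂ x - c with hφ₃
  have hφ₃cont : Continuous φ₃ := by continuity
  -- φ₃ as a bounded continuous function belonging to Kset
  have hφ₃lip : ∀ y y', dist (φ₃ y) (φ₃ y') ≤ (n:ℝ) * dist y y' := by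
    intro y y'
    rw [Real.dist_eq, hφ₃]
    have : φ₂ y - c - (φ₂ y' - c) = φ₂ y - φ₂ y' := by ring
    rw [this]
    exact ctrans_lipschitz hCψ y y'
  let f₃ : Torus n →ᵇ ℝ := BoundedContinuousFunction.mkOfCompact ⟨φ₃, hφ₃cont⟩
  have hf₃coe : ⇑f₃ = φ₃ := rfl
  have hf₃A : f₃ ∈ Kset n := by
    constructor
    · intro y y'; rw [hf₃coe]; exact hφ₃lip y y'
    · rw [hf₃coe]; simp [hφ₃, hc]
  -- chain of inequalities
  have h1 : freeEnergy β μ₀ ⇑f₀ ≤ freeEnergy β μ₀ φ₃ := by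
    have := hmin hf₃A
    simpa [hf₃coe] using this
  have h2 : freeEnergy β μ₀ φ₃ = freeEnergy β μ₀ φ₂ := by
    have : φ₃ = fun x => φ₂ x + (-c) := by funext x; rw [hφ₃]; ring
    rw [this]
    exact freeEnergy_add_const hβ hφ₂cont (-c)
  have h3 : freeEnergy β μ₀ φ₂ ≤ freeEnergy β μ₀ φ := freeEnergy_ctrans2_le hβ hφ
  linarith
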